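/- arXiv:2004.01327 — 4 statements merged into one kernel-verified Lean document; each statement's English description precedes it below -/
import Mathlib

section
/- The odd graph O_n admits an induced subgraph of maximum degree at most 1 on a set of strictly more than half of its vertices. -/
/-- The odd graph `O_n`: vertices are the `n`-subsets of `Ω` (where `|Ω| = 2n+1`),
two vertices being adjacent iff the corresponding subsets are disjoint. -/
def oddGraph (n : ℕ) (Ω : Type*) : SimpleGraph {A : Finset Ω // A.card = n} :=
  SimpleGraph.fromRel (fun A B => Disjoint A.1 B.1)

/-!
Fix a point `x ∈ Ω` and take for `U` the `n`-subsets of the `2n`-set `W = Ω \ {x}`. Two disjoint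
`n`-subsets of `W` are complementary in `W`, so every vertex of `U` has at most one neighbour in
`U`. Moreover `|U| = C(2n, n)`, and `(n + 1) C(2n+1, n) = (2n + 1) C(2n, n)` shows
`C(2n+1, n) < 2 C(2n, n)`.
-/

theorem Finset.eq_sdiff_of_disjoint_of_card_add_eq {α : Type*} [DecidableEq α]
    {s t u : Finset α} (hs : s ⊆ u) (ht : t ⊆ u) (hst : Disjoint s t)
    (hcard : s.card + t.card = u.card) : t = u \ s :=
  Finset.eq_of_subset_of_card_le (Finset.subset_sdiff.mpr ⟨ht, hst.symm⟩)
    (by rw [Finset.card_sdiff_of_subset hs]; omega)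

theorem Nat.choose_two_mul_add_one_lt (n : ℕ) :
    (2 * n + 1).choose n < 2 * (2 * n).choose n := by
  have hmul : (2 * n).choose n * (2 * n + 1) = (2 * n + 1).choose n * (n + 1) := by
    rw [Nat.choose_mul_succ_eq]; congr 2; omega
  have hpos : 0 < (2 * n).choose n := Nat.choose_pos (by omega)
  nlinarith

theorem ncard_setOf_val_subset_eq_choose {α : Type*} (n : ℕ) (W : Finset α) :
    {A : {A : Finset α // A.card = n} | A.1 ⊆ W}.ncard = W.card.choose n := by
  rw [← Set.ncard_image_of_injective _ Subtype.val_injective, ← Finset.card_powersetCard,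
    ← Set.ncard_coe_finset]
  congr 1
  ext A
  simp [Finset.mem_powersetCard, and_comm]

theorem oddGraph.disjoint_of_adj {n : ℕ} {Ω : Type*} {A B : {A : Finset Ω // A.card = n}}
    (h : (oddGraph n Ω).Adj A B) : Disjoint A.1 B.1 := by
  rcases (SimpleGraph.fromRel_adj _ _ _).mp h with ⟨-, hAB | hBA⟩
  exacts [hAB, hBA.symm]

theorem Set.Subsingleton.ncard_le_one {α : Type*} {s : Set α} (hs : s.Subsingleton) :
    s.ncard ≤ 1 :=
  (Set.ncard_le_one hs.finite).mpr hs

theorem oddGraph.eq_sdiff_of_adj {n : ℕ} {Ω : Type*} [DecidableEq Ω] {W : Finset Ω}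
    (hW : W.card = 2 * n) {A B : {A : Finset Ω // A.card = n}} (hA : A.1 ⊆ W) (hB : B.1 ⊆ W)
    (hAB : (oddGraph n Ω).Adj A B) : B.1 = W \ A.1 :=
  Finset.eq_sdiff_of_disjoint_of_card_add_eq hA hB (oddGraph.disjoint_of_adj hAB)
    (by rw [A.2, B.2, hW]; ring)

theorem oddGraph.subsingleton_adj_of_subset {n : ℕ} {Ω : Type*} [DecidableEq Ω] {W : Finset Ω}
    (hW : W.card = 2 * n) {A : {A : Finset Ω // A.card = n}} (hA : A.1 ⊆ W) :
    {B ∈ {A : {A : Finset Ω // A.card = n} | A.1 ⊆ W} |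
      (oddGraph n Ω).Adj A B}.Subsingleton := by
  rintro B ⟨hB, hAB⟩ C ⟨hC, hAC⟩
  exact Subtype.ext ((eq_sdiff_of_adj hW hA hB hAB).trans (eq_sdiff_of_adj hW hA hC hAC).symm)

theorem oddGraph_induced_matching_on_more_than_half_general (n : ℕ)
    (Ω : Type*) [Fintype Ω] (hΩ : Fintype.card Ω = 2 * n + 1) :
    ∃ U : Set {A : Finset Ω // A.card = n},
      2 * U.ncard > Nat.card {A : Finset Ω // A.card = n} ∧
      ∀ A ∈ U, ({B ∈ U | (oddGraph n Ω).Adj A B}).ncard ≤ 1 := by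
  classical
  obtain ⟨x⟩ : Nonempty Ω := Fintype.card_pos_iff.mp (by omega)
  have hW : (Finset.univ.erase x).card = 2 * n := by
    rw [Finset.card_erase_of_mem (Finset.mem_univ x), Finset.card_univ, hΩ, Nat.add_sub_cancel]
  refine ⟨{A | A.1 ⊆ Finset.univ.erase x}, ?_, fun A hA =>
    (oddGraph.subsingleton_adj_of_subset hW hA).ncard_le_one⟩
  rw [ncard_setOf_val_subset_eq_choose, hW, Nat.card_eq_fintype_card, Fintype.card_finset_len, hΩ]
  exact Nat.choose_two_mul_add_one_lt n

/-- The odd graph `O_n` admits an induced subgraph of maximum degree at most `1`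
on a set of strictly more than half of its vertices. -/
theorem oddGraph_induced_matching_on_more_than_half (n : ℕ) (hn : 1 ≤ n)
    (Ω : Type*) [Fintype Ω] (hΩ : Fintype.card Ω = 2 * n + 1) :
    ∃ U : Set {A : Finset Ω // A.card = n},
      2 * U.ncard > Nat.card {A : Finset Ω // A.card = n} ∧
      ∀ A ∈ U, ({B ∈ U | (oddGraph n Ω).Adj A B}).ncard ≤ 1 :=
  oddGraph_induced_matching_on_more_than_half_general n Ω hΩ
end

section
/- If Γ is a d-regular graph (d ≥ 1) on n vertices and X is a subset of vertices such that the induced subgraph on X has maximum degree at most 1, then |X|/n ≤ d/(2d−1), equivalently (2d−1)|X| ≤ d·n. -/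
/-!
Count the edges between `X` and its complement. Each vertex of `X` has at most one neighbour
in `X`, so at least `(d - 1)|X|` of these edges leave `X`; each vertex outside `X` receives at
most `d` of them, so there are at most `d(n - |X|)`. Comparing gives `(2d - 1)|X| ≤ dn`.
-/

open Finset

namespace SimpleGraph

variable {V : Type*} [Fintype V] (G : SimpleGraph V) [DecidableRel G.Adj]

theorem card_filter_adj_le_degree (s : Finset V) (v : V) :
    #{w ∈ s | G.Adj w v} ≤ G.degree v := by
  rw [← card_neighborFinset_eq_degree]
  exact card_le_card fun w hw => (G.mem_neighborFinset v w).2 (mem_filter.1 hw).2.symm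

variable [DecidableEq V]

theorem card_filter_adj_add_card_filter_adj_compl (s : Finset V) (v : V) :
    #{w ∈ s | G.Adj v w} + #{w ∈ sᶜ | G.Adj v w} = G.degree v := by
  rw [← card_union_of_disjoint (disjoint_filter_filter disjoint_compl_right), ← filter_union,
    union_compl, ← card_neighborFinset_eq_degree, neighborFinset_eq_filter]

theorem mul_card_le_of_isRegularOfDegree {d k : ℕ} (hreg : G.IsRegularOfDegree d)
    (s : Finset V) (hs : ∀ v ∈ s, #{w ∈ s | G.Adj v w} ≤ k) :
    (2 * d - k) * #s ≤ d * Fintype.card V := by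
  have hout : ∀ v ∈ s, d - k ≤ #{w ∈ sᶜ | G.Adj v w} := fun v hv => by
    have := G.card_filter_adj_add_card_filter_adj_compl s v
    have := hs v hv
    have := hreg.degree_eq v
    omega
  have hin : ∀ w ∈ sᶜ, #{v ∈ s | G.Adj v w} ≤ d := fun w _ =>
    hreg.degree_eq w ▸ G.card_filter_adj_le_degree s w
  have boundary : #s * (d - k) ≤ #sᶜ * d := card_nsmul_le_card_nsmul G.Adj hout hin
  have hcompl : #s + #sᶜ = Fintype.card V := card_add_card_compl s
  calc (2 * d - k) * #s ≤ (d - k) * #s + d * #s := by rw [← add_mul]; gcongr; omega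
    _ ≤ d * #sᶜ + d * #s := by linarith
    _ = d * Fintype.card V := by rw [← mul_add, add_comm, hcompl]

end SimpleGraph

theorem regular_induced_matching_bound_general {V : Type*} [Fintype V]
    (Γ : SimpleGraph V) (d : ℕ)
    (hreg : ∀ v : V, Nat.card (Γ.neighborSet v) = d)
    (X : Set V) (hX : ∀ v ∈ X, ({w ∈ X | Γ.Adj v w}).ncard ≤ 1) :
    (2 * d - 1) * X.ncard ≤ d * Fintype.card V := by
  classical
  have hregular : Γ.IsRegularOfDegree d := fun v => by
    rw [← hreg v, Nat.card_eq_fintype_card, SimpleGraph.card_neighborSet_eq_degree]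
  rw [Set.ncard_eq_toFinset_card']
  refine Γ.mul_card_le_of_isRegularOfDegree hregular X.toFinset fun v hv => ?_
  rw [← Set.ncard_coe_finset]
  convert hX v (Set.mem_toFinset.1 hv) using 2
  ext w
  simp

/-- If `Γ` is a `d`-regular graph (`d ≥ 1`) on `n` vertices and `X` is a set of vertices
such that the induced subgraph on `X` has maximum degree at most `1`, then
`|X|/n ≤ d/(2d-1)`, equivalently `(2d-1)|X| ≤ d·n`. -/
theorem regular_induced_matching_bound {V : Type*} [Fintype V]
    (Γ : SimpleGraph V) (d : ℕ) (hd : 1 ≤ d)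
    (hreg : ∀ v : V, Nat.card (Γ.neighborSet v) = d)
    (X : Set V) (hX : ∀ v ∈ X, ({w ∈ X | Γ.Adj v w}).ncard ≤ 1) :
    (2 * d - 1) * X.ncard ≤ d * Fintype.card V :=
  regular_induced_matching_bound_general Γ d hreg X hX
end

section
/- For every m ≥ 1, the Cayley graph Cay(D_{18m}, {b, ab, a³b}) on the dihedral group of order 18m admits an induced subgraph of maximum degree at most 1 on a set of 10m vertices, which is more than half of 18m. -/
/-- The Cayley graph of a group `G` with connection set `S`. -/
def cayley (G : Type*) [Group G] (S : Set G) : SimpleGraph G :=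
  SimpleGraph.fromRel (fun g h => g⁻¹ * h ∈ S)

/-!
Reducing indices modulo 9 is a homomorphism `D_{18m} → D_18` which is injective on
`{1} ∪ S ∪ S⁻¹`, so it maps the neighbourhood of every vertex of `Cay(D_{18m}, S)` injectively
into the neighbourhood of its image in `Cay(D_18, S)`. Hence the preimage of a set inducing a
subgraph of maximum degree 1 in `Cay(D_18, S)` again induces one, and being a union of cosets of
the kernel it is `m` times as large. In `D_18` the 10 elements `r i, sr i` with
`i ∈ {0, 1, 3, 4, 7}` do the job.
-/

section Cayley

variable {G H : Type*} [Group G] [Group H] {f : G →* H} {S : Set G}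

theorem cayley_adj_iff {g h : G} :
    (cayley G S).Adj g h ↔ g ≠ h ∧ g⁻¹ * h ∈ S ∪ S⁻¹ := by
  simp [cayley, Set.mem_inv]

theorem cayley_adj_map (hf : Set.InjOn f (insert 1 (S ∪ S⁻¹))) {g h : G}
    (hgh : (cayley G S).Adj g h) : (cayley H (f '' S)).Adj (f g) (f h) := by
  rw [cayley_adj_iff] at hgh ⊢
  obtain ⟨hne, hS⟩ := hgh
  refine ⟨fun he => hne ?_, ?_⟩
  · have : g⁻¹ * h = 1 := hf (Or.inr hS) (Or.inl rfl) (by simp [he])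
    rwa [inv_mul_eq_one] at this
  · rw [← map_inv, ← map_mul, ← Set.image_inv, ← Set.image_union]
    exact Set.mem_image_of_mem f hS

theorem eq_of_cayley_adj_of_map_eq (hf : Set.InjOn f (S ∪ S⁻¹)) {g h₁ h₂ : G}
    (hgh₁ : (cayley G S).Adj g h₁) (hgh₂ : (cayley G S).Adj g h₂) (he : f h₁ = f h₂) :
    h₁ = h₂ := by
  rw [cayley_adj_iff] at hgh₁ hgh₂
  exact mul_left_cancel (hf hgh₁.2 hgh₂.2 (by simp [he]))

theorem subsingleton_cayley_nbhd_preimage (hf : Set.InjOn f (insert 1 (S ∪ S⁻¹)))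
    {V : Set H} (hV : ∀ x ∈ V, {y ∈ V | (cayley H (f '' S)).Adj x y}.Subsingleton) :
    ∀ g ∈ f ⁻¹' V, {h ∈ f ⁻¹' V | (cayley G S).Adj g h}.Subsingleton := by
  rintro g hg h₁ ⟨hh₁, hgh₁⟩ h₂ ⟨hh₂, hgh₂⟩
  refine eq_of_cayley_adj_of_map_eq (hf.mono (Set.subset_insert _ _)) hgh₁ hgh₂ ?_
  exact hV _ hg ⟨hh₁, cayley_adj_map hf hgh₁⟩ ⟨hh₂, cayley_adj_map hf hgh₂⟩

end Cayley

theorem MonoidHom.card_preimage_of_surjective {G H : Type*} [Group G] [Group H] (f : G →* H)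
    (hf : Function.Surjective f) (V : Set H) :
    Nat.card (f ⁻¹' V) = Nat.card f.ker * Nat.card V := by
  set e := QuotientGroup.quotientKerEquivOfSurjective f hf
  have hV : f ⁻¹' V = QuotientGroup.mk ⁻¹' (e ⁻¹' V) := rfl
  rw [hV, QuotientGroup.card_preimage_mk, Nat.card_preimage_of_injective e.injective]
  exact e.surjective.range_eq ▸ Set.subset_univ V

namespace DihedralGroup

def castHom {k n : ℕ} (h : n ∣ k) : DihedralGroup k →* DihedralGroup n where
  toFun
    | r i => r (ZMod.castHom h (ZMod n) i)
    | sr i => sr (ZMod.castHom h (ZMod n) i)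
  map_one' := congrArg r (map_zero _)
  map_mul' := by
    rintro (i | i) (j | j) <;> simp only [r_mul_r, r_mul_sr, sr_mul_r, sr_mul_sr, map_add, map_sub]

@[simp]
theorem castHom_r {k n : ℕ} (h : n ∣ k) (i : ZMod k) :
    castHom h (r i) = r (ZMod.castHom h _ i) :=
  rfl

@[simp]
theorem castHom_sr {k n : ℕ} (h : n ∣ k) (i : ZMod k) :
    castHom h (sr i) = sr (ZMod.castHom h _ i) :=
  rfl

theorem castHom_surjective {k n : ℕ} (h : n ∣ k) : Function.Surjective (castHom h) := by
  have hcast := ZMod.ringHom_surjective (ZMod.castHom h (ZMod n))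
  rintro (i | i) <;> obtain ⟨j, rfl⟩ := hcast i
  exacts [⟨r j, rfl⟩, ⟨sr j, rfl⟩]

theorem card_ker_castHom_mul {k n : ℕ} (h : n ∣ k) : Nat.card (castHom h).ker * n = k := by
  have hcard := (castHom h).card_preimage_of_surjective (castHom_surjective h) Set.univ
  rw [Set.preimage_univ, Nat.card_univ, Nat.card_univ, nat_card, nat_card] at hcard
  linarith

def cubicGens (n : ℕ) : Set (DihedralGroup n) := {sr 0, r 1 * sr 0, r 1 ^ 3 * sr 0}

theorem inv_cubicGens (n : ℕ) : (cubicGens n)⁻¹ = cubicGens n := by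
  simp [cubicGens, Set.inv_insert, r_mul_sr, inv_sr]

theorem castHom_image_cubicGens {k n : ℕ} (h : n ∣ k) :
    castHom h '' cubicGens k = cubicGens n := by
  simp only [cubicGens, Set.image_insert_eq, Set.image_singleton, map_mul, map_pow, castHom_r,
    castHom_sr, map_one, map_zero]

theorem injOn_castHom_cubicGens {k : ℕ} (h : 9 ∣ k) :
    Set.InjOn (castHom h) (insert 1 (cubicGens k ∪ (cubicGens k)⁻¹)) := by
  rw [inv_cubicGens, Set.union_self]
  have hT : insert 1 (cubicGens k) =
      ↑({1, sr 0, r 1 * sr 0, r 1 ^ 3 * sr 0} : Finset (DihedralGroup k)) := by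
    simp [cubicGens]
  rw [hT, ← Finset.card_image_iff]
  -- at most four elements, whose four images in `D_18` are distinct
  refine le_antisymm Finset.card_image_le (Finset.card_le_four.trans ?_)
  simp only [Finset.image_insert, Finset.image_singleton, map_one, map_mul, map_pow,
    castHom_r, castHom_sr, map_zero]
  decide

/-- The set `U₁₈` of the paper. Since `r i` and `sr j` are adjacent iff `i + j ∈ {0, -1, -3}`,
the induced subgraph is the matching `0 — 0, 1 — 7, 3 — 3, 4 — 4, 7 — 1`. -/
def inducedMatchingSet : Finset (DihedralGroup 9) :=
  {r 0, r 1, r 3, r 4, r 7, sr 0, sr 1, sr 3, sr 4, sr 7}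

theorem subsingleton_cayley_cubicGens_inducedMatchingSet :
    ∀ x ∈ (inducedMatchingSet : Set (DihedralGroup 9)),
      {y ∈ (inducedMatchingSet : Set (DihedralGroup 9)) |
        (cayley _ (cubicGens 9)).Adj x y}.Subsingleton := by
  simp only [Set.Subsingleton, Set.mem_ofPred_eq, cayley_adj_iff, Finset.mem_coe, cubicGens,
    Set.mem_union, Set.mem_inv, Set.mem_insert_iff, Set.mem_singleton_iff]
  decide

end DihedralGroup

open DihedralGroup

/-- For every `m ≥ 1`, the Cayley graph `Cay(D_{18m}, {b, ab, a³b})` on the dihedral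
group of order `18m` admits an induced subgraph of maximum degree at most 1 on a set of
`10m` vertices, which is more than half of `18m`. -/
theorem dihedral18m_induced_matching (m : ℕ) (hm : 1 ≤ m) :
    let a : DihedralGroup (9 * m) := DihedralGroup.r 1
    let b : DihedralGroup (9 * m) := DihedralGroup.sr 0
    let S : Set (DihedralGroup (9 * m)) := {b, a * b, a ^ 3 * b}
    ∃ U : Set (DihedralGroup (9 * m)),
      U.ncard = 10 * m ∧ 2 * U.ncard > Nat.card (DihedralGroup (9 * m)) ∧
      ∀ g ∈ U, ({h ∈ U | (cayley (DihedralGroup (9 * m)) S).Adj g h}).ncard ≤ 1 := by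
  intro a b S
  have : NeZero (9 * m) := ⟨by omega⟩
  have h9 : 9 ∣ 9 * m := dvd_mul_right 9 m
  have hker := card_ker_castHom_mul h9
  have hU : (castHom h9 ⁻¹' inducedMatchingSet).ncard = 10 * m := by
    rw [← Nat.card_coe_set_eq, (castHom h9).card_preimage_of_surjective (castHom_surjective h9),
      Nat.card_coe_set_eq, Set.ncard_coe_finset, show inducedMatchingSet.card = 10 by decide]
    omega
  refine ⟨castHom h9 ⁻¹' inducedMatchingSet, hU, by rw [hU, nat_card]; omega, fun g hg => ?_⟩
  refine Set.ncard_le_one_iff_subsingleton.2 ?_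
  refine subsingleton_cayley_nbhd_preimage (injOn_castHom_cubicGens h9) ?_ g hg
  rw [castHom_image_cubicGens]
  exact subsingleton_cayley_cubicGens_inducedMatchingSet
end

section
/- Let G be a finite group with generating set S such that Cay(G,S) is bipartite and there exists H ⊆ G with |H| > |G|/2 whose induced subgraph in Cay(G,S) has maximum degree at most 1. Then the Cayley graph of Ĝ = Z₂ ≀ G with the canonical generating set Ŝ is bipartite and admits a subset Ĥ ⊆ Ĝ with |Ĥ| > |Ĝ|/2 whose induced subgraph has maximum degree at most 1. -/
/-- The wreath product `Z₂ ≀ G`: pairs `(a, g)` with `a : G → ZMod 2` and `g ∈ G`,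
with multiplication `(a, g)(b, h) = (a + b^g, g h)` where `b^g(x) = b(g⁻¹ x)`. -/
structure Wr (G : Type*) where
  a : G → ZMod 2
  g : G

namespace Wr
variable {G : Type*} [Group G]

instance : Mul (Wr G) := ⟨fun x y => ⟨x.a + fun t => y.a (x.g⁻¹ * t), x.g * y.g⟩⟩
instance : One (Wr G) := ⟨⟨0, 1⟩⟩
instance : Inv (Wr G) := ⟨fun x => ⟨fun t => x.a (x.g * t), x.g⁻¹⟩⟩

theorem mul_def (x y : Wr G) :
    x * y = ⟨x.a + fun t => y.a (x.g⁻¹ * t), x.g * y.g⟩ := rfl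
theorem one_def : (1 : Wr G) = ⟨0, 1⟩ := rfl
theorem inv_def (x : Wr G) : x⁻¹ = ⟨fun t => x.a (x.g * t), x.g⁻¹⟩ := rfl

instance : Group (Wr G) where
  mul_assoc x y z := by
    simp only [mul_def]
    congr 1
    · funext t
      simp [add_assoc, mul_inv_rev, mul_assoc]
    · exact mul_assoc _ _ _
  one_mul x := by
    cases x with
    | mk a g =>
      simp only [mul_def, one_def]
      congr 1
      · funext t; simp
      · exact one_mul g
  mul_one x := by
    cases x with
    | mk a g =>
      simp only [mul_def, one_def]
      congr 1
      · funext t; simp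
      · exact mul_one g
  inv_mul_cancel x := by
    cases x with
    | mk a g =>
      simp only [mul_def, inv_def, one_def]
      congr 1
      · funext t
        have h2 : ∀ z : ZMod 2, z + z = 0 := by decide
        simp [h2]
      · exact inv_mul_cancel g

end Wr

/-- The generator `(a₁, 1)` of the wreath product, where `a₁` is the indicator
function of `{1}`. -/
def wgen (G : Type*) [Group G] [DecidableEq G] : Wr G :=
  ⟨fun t => if t = 1 then 1 else 0, 1⟩

/-- The canonical generating set `Ŝ = {(a₁, 1)} ∪ {(0, s) : s ∈ S}` of `Z₂ ≀ G`. -/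
def wS {G : Type*} [Group G] [DecidableEq G] (S : Set G) : Set (Wr G) :=
  insert (wgen G) ((fun s => Wr.mk 0 s) '' S)

/-!
Colour `(a, g)` by the colour of `g` plus the number of lit lamps of `a`, mod 2: multiplying by
`(a₁, 1)` toggles one lamp and multiplying by `(0, s)` moves `g` along an edge of `Cay(G, S)`, so
this is a proper 2-colouring. For `Ĥ` take, over each lamp configuration `a`, the fiber `H` when
`a` vanishes on `H` and a colour class of `Cay(G, S)` otherwise. Right multiplication by some
`s ∈ S \ {1}` maps each colour class injectively into the other, so every fiber has at least
`|G| / 2` elements and the fiber over `a = 0` has more. A vertex in a fiber `H` has at most one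
neighbour in that fiber, and the colour class over the toggled configuration is chosen to exclude
its toggle; a vertex in a colour class can only be adjacent to its toggle. If `S ⊆ {1}` the
toggles are the only edges and `Ĥ = Ĝ` works.
-/

theorem cayley_adj_mul {G : Type*} [Group G] {S : Set G} {s : G} (hs : s ∈ S) (hs1 : s ≠ 1)
    (g : G) : (cayley G S).Adj g (g * s) := by
  rw [cayley, SimpleGraph.fromRel_adj]
  exact ⟨(mul_ne_left.2 hs1).symm, .inl (by simpa using hs)⟩

theorem not_adj_cayley_of_forall_eq_one {G : Type*} [Group G] {S : Set G} (hS : ∀ s ∈ S, s = 1)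
    (g h : G) : ¬ (cayley G S).Adj g h := by
  rw [cayley, SimpleGraph.fromRel_adj]
  rintro ⟨hne, hgh | hhg⟩
  · exact hne (inv_mul_eq_one.1 (hS _ hgh))
  · exact hne (inv_mul_eq_one.1 (hS _ hhg)).symm

theorem SimpleGraph.Coloring.card_le_two_mul_ncard_colorClass {V : Type*} [Finite V]
    {Γ : SimpleGraph V} (C : Γ.Coloring (ZMod 2)) {f : V → V} (hf : f.Injective)
    (hadj : ∀ v, Γ.Adj v (f v)) (i : ZMod 2) :
    Nat.card V ≤ 2 * (C.colorClass i).ncard := by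
  have hcompl : (C.colorClass i)ᶜ.ncard ≤ (C.colorClass i).ncard := by
    refine Set.ncard_le_ncard_of_injOn f (fun v hv => ?_) hf.injOn
    have two_colors : ∀ p q r : ZMod 2, p ≠ r → p ≠ q → q = r := by decide
    exact two_colors _ _ _ hv (C.valid (hadj v))
  have := Set.ncard_add_ncard_compl (C.colorClass i)
  omega

namespace Wr

variable {G : Type*}

@[ext]
theorem ext {x y : Wr G} (ha : x.a = y.a) (hg : x.g = y.g) : x = y := by
  cases x; cases y; simp_all

def equivProd : Wr G ≃ (G → ZMod 2) × G where
  toFun x := (x.a, x.g)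
  invFun p := ⟨p.1, p.2⟩

instance [Finite G] : Finite (Wr G) := .of_equiv _ equivProd.symm

theorem ncard_eq_sum_ncard_fiber [Fintype G] [DecidableEq G] (K : Set (Wr G)) :
    K.ncard = ∑ a, {g | (⟨a, g⟩ : Wr G) ∈ K}.ncard := by
  let e : K ≃ Σ a : G → ZMod 2, {g | (⟨a, g⟩ : Wr G) ∈ K} :=
    { toFun x := ⟨x.1.a, x.1.g, x.2⟩
      invFun p := ⟨⟨p.1, p.2.1⟩, p.2.2⟩ }
  simp only [← Nat.card_coe_set_eq, Nat.card_congr e, Nat.card_sigma]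

/- The colour `1 + ∑ᶠ h ∈ H, a h * c h` is `c g + 1` when `a` is the configuration `b + δ_g` with
`b` vanishing on `H` and `g ∈ H`, so the toggle of `(b, g) ∈ Ĥ` is not in `Ĥ`. -/
open Classical in
def liftFiber (c : G → ZMod 2) (H : Set G) (a : G → ZMod 2) : Set G :=
  if Set.EqOn a 0 H then H else {g | c g = 1 + ∑ᶠ h ∈ H, a h * c h}

def liftSet (c : G → ZMod 2) (H : Set G) : Set (Wr G) := {x | x.g ∈ liftFiber c H x.a}

theorem mem_liftSet {c : G → ZMod 2} {H : Set G} {x : Wr G} :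
    x ∈ liftSet c H ↔ x.g ∈ liftFiber c H x.a := Iff.rfl

theorem liftFiber_of_eqOn {c a : G → ZMod 2} {H : Set G} (ha : Set.EqOn a 0 H) :
    liftFiber c H a = H := by
  simp [liftFiber, ha]

theorem liftFiber_of_not_eqOn {c a : G → ZMod 2} {H : Set G} (ha : ¬ Set.EqOn a 0 H) :
    liftFiber c H a = {g | c g = 1 + ∑ᶠ h ∈ H, a h * c h} := by
  simp [liftFiber, ha]

theorem finsum_mem_add_single_mul [DecidableEq G] {c a : G → ZMod 2} {H : Set G}
    (ha : Set.EqOn a 0 H) {g : G} (hg : g ∈ H) :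
    ∑ᶠ h ∈ H, (a + Pi.single g 1 : G → ZMod 2) h * c h = c g := by
  rw [finsum_mem_def, finsum_eq_single _ g, Set.indicator_of_mem hg]
  · simp [ha hg]
  · intro h hne
    by_cases hh : h ∈ H
    · simp [Set.indicator_of_mem hh, ha hh, hne]
    · exact Set.indicator_of_notMem hh _

variable [Group G]

theorem mul_mk_zero (x : Wr G) (s : G) : x * ⟨0, s⟩ = ⟨x.a, x.g * s⟩ := by
  ext t <;> simp [mul_def]

variable [DecidableEq G]

theorem mul_wgen_g (x : Wr G) : (x * wgen G).g = x.g := mul_one _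

theorem mul_wgen_a (x : Wr G) : (x * wgen G).a = x.a + Pi.single x.g 1 := by
  ext t
  simp [mul_def, wgen, Pi.single_apply, inv_mul_eq_one, eq_comm]

theorem mul_wgen_mul_wgen (x : Wr G) : x * wgen G * wgen G = x := by
  ext1
  · rw [mul_wgen_a, mul_wgen_a, mul_wgen_g, add_assoc, CharTwo.add_self_eq_zero, add_zero]
  · rw [mul_wgen_g, mul_wgen_g]

theorem eq_mul_wgen_or_of_adj {S : Set G} {x y : Wr G} (h : (cayley (Wr G) (wS S)).Adj x y) :
    y = x * wgen G ∨ (y.a = x.a ∧ (cayley G S).Adj x.g y.g) := by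
  have step : ∀ {u v : Wr G}, u⁻¹ * v ∈ wS S → u ≠ v →
      v = u * wgen G ∨ (v.a = u.a ∧ (cayley G S).Adj u.g v.g) := by
    rintro u v (huv | ⟨s, hs, huv⟩) hne
    · exact .inl (by rw [← huv, mul_inv_cancel_left])
    · have hv : v = ⟨u.a, u.g * s⟩ := by
        rw [← mul_mk_zero, show (⟨0, s⟩ : Wr G) = u⁻¹ * v from huv, mul_inv_cancel_left]
      subst hv
      have hs1 : s ≠ 1 := by
        rintro rfl
        exact hne (by ext <;> simp)
      exact .inr ⟨rfl, cayley_adj_mul hs hs1 u.g⟩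
  rw [cayley, SimpleGraph.fromRel_adj] at h
  obtain ⟨hne, hxy | hyx⟩ := h
  · exact step hxy hne
  · rcases step hyx hne.symm with rfl | ⟨ha, hadj⟩
    · exact .inl (mul_wgen_mul_wgen y).symm
    · exact .inr ⟨ha.symm, hadj.symm⟩

theorem mul_wgen_notMem_liftSet {c : G → ZMod 2} {H : Set G} {x : Wr G}
    (ha : Set.EqOn x.a 0 H) (hg : x.g ∈ H) : x * wgen G ∉ liftSet c H := by
  have hna : ¬ Set.EqOn (x * wgen G).a 0 H := fun h => by
    simpa [mul_wgen_a, ha hg] using h hg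
  rw [mem_liftSet, liftFiber_of_not_eqOn hna, Set.mem_ofPred_eq, mul_wgen_a, mul_wgen_g,
    finsum_mem_add_single_mul ha hg]
  simp

def liftColoring [Fintype G] {S : Set G} (C : (cayley G S).Coloring (ZMod 2)) :
    (cayley (Wr G) (wS S)).Coloring (ZMod 2) :=
  SimpleGraph.Coloring.mk (fun x => C x.g + ∑ t, x.a t) fun {x y} h => by
    rcases eq_mul_wgen_or_of_adj h with rfl | ⟨ha, hadj⟩
    · simp [mul_wgen_g, mul_wgen_a, Finset.sum_add_distrib]
    · simpa [ha] using C.valid hadj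

theorem ncard_adj_liftSet_le_one [Finite G] {S : Set G} (C : (cayley G S).Coloring (ZMod 2))
    {H : Set G} (hH1 : ∀ g ∈ H, {h ∈ H | (cayley G S).Adj g h}.ncard ≤ 1) {x : Wr G}
    (hx : x ∈ liftSet C H) : {y ∈ liftSet C H | (cayley (Wr G) (wS S)).Adj x y}.ncard ≤ 1 := by
  by_cases ha : Set.EqOn x.a 0 H
  · have hg : x.g ∈ H := by rwa [mem_liftSet, liftFiber_of_eqOn ha] at hx
    calc _ ≤ (Wr.mk x.a '' {h ∈ H | (cayley G S).Adj x.g h}).ncard := Set.ncard_le_ncard ?_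
      _ ≤ _ := Set.ncard_image_le
      _ ≤ 1 := hH1 _ hg
    rintro y ⟨hy, hxy⟩
    rcases eq_mul_wgen_or_of_adj hxy with rfl | ⟨hya, hadj⟩
    · exact absurd hy (mul_wgen_notMem_liftSet ha hg)
    · refine ⟨y.g, ⟨?_, hadj⟩, by ext <;> simp [hya]⟩
      rwa [mem_liftSet, hya, liftFiber_of_eqOn ha] at hy
  · calc _ ≤ ({x * wgen G} : Set (Wr G)).ncard := Set.ncard_le_ncard ?_
      _ = 1 := Set.ncard_singleton _
    rintro y ⟨hy, hxy⟩
    rcases eq_mul_wgen_or_of_adj hxy with rfl | ⟨hya, hadj⟩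
    · rfl
    · rw [mem_liftSet, liftFiber_of_not_eqOn ha] at hx
      rw [mem_liftSet, hya, liftFiber_of_not_eqOn ha] at hy
      exact absurd (hx.trans hy.symm) (C.valid hadj)

theorem card_lt_two_mul_ncard_liftSet [Fintype G] {S : Set G}
    (C : (cayley G S).Coloring (ZMod 2)) {s : G} (hs : s ∈ S) (hs1 : s ≠ 1) {H : Set G}
    (hH : Nat.card G < 2 * H.ncard) : Nat.card (Wr G) < 2 * (liftSet C H).ncard := by
  have hfiber : ∀ a, Nat.card G ≤ 2 * (liftFiber C H a).ncard := by
    intro a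
    by_cases ha : Set.EqOn a 0 H
    · rw [liftFiber_of_eqOn ha]
      exact hH.le
    · rw [liftFiber_of_not_eqOn ha]
      exact C.card_le_two_mul_ncard_colorClass (mul_left_injective s) (cayley_adj_mul hs hs1) _
  calc Nat.card (Wr G) = ∑ _ : G → ZMod 2, Nat.card G := by
        rw [← Set.ncard_univ, ncard_eq_sum_ncard_fiber]
        simp [Set.ncard_univ]
    _ < ∑ a, 2 * (liftFiber C H a).ncard :=
        Finset.sum_lt_sum (fun a _ => hfiber a)
          ⟨0, Finset.mem_univ _, by rwa [liftFiber_of_eqOn fun _ _ => rfl]⟩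
    _ = 2 * (liftSet C H).ncard := by
        rw [ncard_eq_sum_ncard_fiber, Finset.mul_sum]
        rfl

theorem ncard_adj_le_one_of_forall_eq_one {S : Set G} (hS : ∀ s ∈ S, s = 1) (K : Set (Wr G))
    (x : Wr G) : {y ∈ K | (cayley (Wr G) (wS S)).Adj x y}.ncard ≤ 1 := by
  calc _ ≤ ({x * wgen G} : Set (Wr G)).ncard := Set.ncard_le_ncard ?_
    _ = 1 := Set.ncard_singleton _
  rintro y ⟨-, hxy⟩
  rcases eq_mul_wgen_or_of_adj hxy with rfl | ⟨-, hadj⟩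
  · rfl
  · exact absurd hadj (not_adj_cayley_of_forall_eq_one hS _ _)

end Wr

theorem wreath_lemma_general (G : Type*) [Group G] [Fintype G] [DecidableEq G]
    (S : Set G)
    (hbip : (cayley G S).Colorable 2)
    (H : Set G) (hH : 2 * H.ncard > Nat.card G)
    (hH1 : ∀ g ∈ H, ({h ∈ H | (cayley G S).Adj g h}).ncard ≤ 1) :
    (cayley (Wr G) (wS S)).Colorable 2 ∧
      ∃ K : Set (Wr G), 2 * K.ncard > Nat.card (Wr G) ∧
        ∀ x ∈ K, ({y ∈ K | (cayley (Wr G) (wS S)).Adj x y}).ncard ≤ 1 := by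
  have C := hbip.toColoring (by simp : 2 ≤ Fintype.card (ZMod 2))
  refine ⟨by simpa using (Wr.liftColoring C).colorable, ?_⟩
  by_cases hS : ∃ s ∈ S, s ≠ 1
  · obtain ⟨s, hs, hs1⟩ := hS
    exact ⟨Wr.liftSet C H, Wr.card_lt_two_mul_ncard_liftSet C hs hs1 hH,
      fun x hx => Wr.ncard_adj_liftSet_le_one C hH1 hx⟩
  · push Not at hS
    refine ⟨Set.univ, ?_, fun x _ => Wr.ncard_adj_le_one_of_forall_eq_one hS _ x⟩
    rw [Set.ncard_univ]
    have := Nat.card_pos (α := Wr G)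
    omega

/-- Lemma 1 of the paper: if `Cay(G, S)` is bipartite and has an induced subgraph of
maximum degree at most 1 on more than half its vertices, then the same is true of the
Cayley graph of `Z₂ ≀ G` with the canonical generating set `Ŝ`. -/
theorem wreath_lemma (G : Type*) [Group G] [Fintype G] [DecidableEq G]
    (S : Set G) (hgen : Subgroup.closure S = ⊤)
    (hbip : (cayley G S).Colorable 2)
    (H : Set G) (hH : 2 * H.ncard > Nat.card G)
    (hH1 : ∀ g ∈ H, ({h ∈ H | (cayley G S).Adj g h}).ncard ≤ 1) :
    (cayley (Wr G) (wS S)).Colorable 2 ∧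
      ∃ K : Set (Wr G), 2 * K.ncard > Nat.card (Wr G) ∧
        ∀ x ∈ K, ({y ∈ K | (cayley (Wr G) (wS S)).Adj x y}).ncard ≤ 1 :=
  wreath_lemma_general G S hbip H hH hH1
end
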